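/- If a function v on a polygon E is harmonic in E, continuous on the closure, and its restriction to each edge of ∂E is affine, and v vanishes at every vertex of E, then v ≡ 0 on E. -/

import Mathlib

open Filter Set Topology

lemma secondDeriv_nonpos_of_isLocalMax {g : ℝ → ℝ} {m : ℝ}
    (hg : ∀ᶠ t in 𝓝 (0:ℝ), DifferentiableAt ℝ g t)
    (hmax : IsLocalMax g 0)
    (hd2 : HasDerivAt (deriv g) m 0) : m ≤ 0 := by
  by_contra h
  push_neg at h
  have h0 : deriv g 0 = 0 := hmax.deriv_eq_zero
  have hslope : Tendsto (slope (deriv g) 0) (𝓝[≠] 0) (𝓝 m) :=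
    hasDerivAt_iff_tendsto_slope.mp hd2
  have hpos : ∀ᶠ t in 𝓝[≠] (0:ℝ), 0 < slope (deriv g) 0 t :=
    hslope.eventually (eventually_gt_nhds h)
  rw [eventually_nhdsWithin_iff] at hpos
  have hall : ∀ᶠ t in 𝓝 (0:ℝ),
      DifferentiableAt ℝ g t ∧ g t ≤ g 0 ∧ (t ∈ ({(0:ℝ)}ᶜ : Set ℝ) → 0 < slope (deriv g) 0 t) :=
    hg.and (hmax.and hpos)
  obtain ⟨δ, hδ, hball⟩ := Metric.eventually_nhds_iff.mp hall
  have hsub : Icc (0:ℝ) (δ/2) ⊆ Metric.ball (0:ℝ) δ := by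
    intro t ht
    simp only [Metric.mem_ball, Real.dist_eq, sub_zero]
    rw [abs_lt]; constructor <;> [linarith [ht.1]; linarith [ht.2]]
  have hcontg : ContinuousOn g (Icc (0:ℝ) (δ/2)) := fun t ht =>
    ((hball (by simpa [Real.dist_eq] using hsub ht)).1).continuousAt.continuousWithinAt
  have hderivpos : ∀ t ∈ interior (Icc (0:ℝ) (δ/2)), 0 < deriv g t := by
    rw [interior_Icc]
    intro t ht
    have htne : t ∈ ({(0:ℝ)}ᶜ : Set ℝ) := by simp [ne_of_gt ht.1]
    have hs := (hball (by simpa [Real.dist_eq] using hsub ⟨le_of_lt ht.1, le_of_lt ht.2⟩)).2.2 htne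
    rw [slope_def_field, h0] at hs
    have : 0 < deriv g t / t := by simpa using hs
    have := div_pos_iff.mp this
    rcases this with ⟨h1, _⟩ | ⟨_, h2⟩
    · exact h1
    · linarith [ht.1]
  have hmono := strictMonoOn_of_deriv_pos (convex_Icc (0:ℝ) (δ/2)) hcontg hderivpos
  have h1 : g 0 < g (δ/2) :=
    hmono (by constructor <;> linarith) (by constructor <;> linarith) (by linarith)
  have h2 : g (δ/2) ≤ g 0 := by
    have hd : dist (δ/2) (0:ℝ) < δ := by
      rw [Real.dist_eq, sub_zero, abs_of_nonneg (by linarith : (0:ℝ) ≤ δ/2)]; linarith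
    exact (hball hd).2.1
  linarith

/-- Second partial derivative ∂²u/∂e² of u : ℝ² → ℝ. -/
noncomputable def secondPartial (u : ℝ × ℝ → ℝ) (e : ℝ × ℝ) (x : ℝ × ℝ) : ℝ :=
  fderiv ℝ (fun y => fderiv ℝ u y e) x e

lemma secondPartial_nonpos_of_isLocalMax {u : ℝ × ℝ → ℝ} {E : Set (ℝ × ℝ)}
    (hE : IsOpen E) {p : ℝ × ℝ} (hp : p ∈ E) (hu : ContDiffOn ℝ 2 u E)
    (hmax : IsLocalMax u p) (e : ℝ × ℝ) : secondPartial u e p ≤ 0 := by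
  set L : ℝ → ℝ × ℝ := fun t => p + t • e with hL
  have hL0 : L 0 = p := by simp [hL]
  have hLd : ∀ t : ℝ, HasDerivAt L e t := by
    intro t
    have := ((hasDerivAt_id t).smul_const e).const_add p
    simpa [hL] using this
  have hLc : Tendsto L (𝓝 0) (𝓝 p) := by
    have := (hLd 0).continuousAt.tendsto
    rwa [hL0] at this
  have hLE : ∀ᶠ t in 𝓝 (0:ℝ), L t ∈ E := hLc.eventually (hE.mem_nhds hp)
  have hdiff : ∀ y ∈ E, DifferentiableAt ℝ u y := fun y hy =>
    (hu.contDiffAt (hE.mem_nhds hy)).differentiableAt (by norm_num)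
  set g : ℝ → ℝ := fun t => u (L t) with hgdef
  have hgd : ∀ᶠ t in 𝓝 (0:ℝ), HasDerivAt g (fderiv ℝ u (L t) e) t := by
    filter_upwards [hLE] with t ht
    exact ((hdiff _ ht).hasFDerivAt.comp_hasDerivAt t (hLd t))
  have hg1 : ∀ᶠ t in 𝓝 (0:ℝ), DifferentiableAt ℝ g t := by
    filter_upwards [hgd] with t ht using ht.differentiableAt
  have hgderiv : deriv g =ᶠ[𝓝 (0:ℝ)] fun t => fderiv ℝ u (L t) e := by
    filter_upwards [hgd] with t ht using ht.deriv
  have hC1 : ContDiffAt ℝ 1 (fderiv ℝ u) p :=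
    (hu.contDiffAt (hE.mem_nhds hp)).fderiv_right (by norm_num)
  have hDF : DifferentiableAt ℝ (fderiv ℝ u) p := hC1.differentiableAt (by norm_num)
  have hFe : DifferentiableAt ℝ (fun y => fderiv ℝ u y e) p := by
    exact (ContinuousLinearMap.apply ℝ ℝ e).differentiableAt.comp p hDF
  have hcomp : HasDerivAt (fun t => fderiv ℝ u (L t) e)
      (fderiv ℝ (fun y => fderiv ℝ u y e) p e) 0 := by
    have h1 : HasFDerivAt (fun y => fderiv ℝ u y e)
        (fderiv ℝ (fun y => fderiv ℝ u y e) p) (L 0) := by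
      rw [hL0]; exact hFe.hasFDerivAt
    exact h1.comp_hasDerivAt 0 (hLd 0)
  have hd2 : HasDerivAt (deriv g) (fderiv ℝ (fun y => fderiv ℝ u y e) p e) 0 :=
    hcomp.congr_of_eventuallyEq hgderiv
  have hgmax : IsLocalMax g 0 := by
    have := hLc.eventually hmax
    simpa [IsLocalMax, IsMaxFilter, hgdef, hL0] using this
  exact secondDeriv_nonpos_of_isLocalMax hg1 hgmax hd2

lemma secondPartial_neg (u : ℝ × ℝ → ℝ) (e : ℝ × ℝ) (x : ℝ × ℝ) :
    secondPartial (fun y => -u y) e x = -secondPartial u e x := by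
  unfold secondPartial
  have h1 : (fun y => fderiv ℝ (fun z => -u z) y e) = fun y => -(fderiv ℝ u y e) := by
    funext y; rw [fderiv_fun_neg]; simp
  rw [h1, fderiv_fun_neg]; simp

lemma hasFDerivAt_quad (y : ℝ × ℝ) :
    HasFDerivAt (fun z : ℝ × ℝ => z.1 ^ 2 + z.2 ^ 2)
      ((2 * y.1) • ContinuousLinearMap.fst ℝ ℝ ℝ +
       (2 * y.2) • ContinuousLinearMap.snd ℝ ℝ ℝ) y := by
  have h1 : HasFDerivAt (fun z : ℝ × ℝ => z.1) (ContinuousLinearMap.fst ℝ ℝ ℝ) y :=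
    hasFDerivAt_fst
  have h2 : HasFDerivAt (fun z : ℝ × ℝ => z.2) (ContinuousLinearMap.snd ℝ ℝ ℝ) y :=
    hasFDerivAt_snd
  have h := (h1.mul h1).add (h2.mul h2)
  have heq : (fun z : ℝ × ℝ => z.1 ^ 2 + z.2 ^ 2) = fun z : ℝ × ℝ => z.1 * z.1 + z.2 * z.2 := by
    funext z; ring
  rw [heq]
  exact h.congr_fderiv (by module)

lemma secondPartial_add_quad {v : ℝ × ℝ → ℝ} {E : Set (ℝ × ℝ)} (hE : IsOpen E)
    (hv : ContDiffOn ℝ 2 v E) (ε : ℝ) {x : ℝ × ℝ} (hx : x ∈ E) (e : ℝ × ℝ) :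
    secondPartial (fun y => v y + ε * (y.1 ^ 2 + y.2 ^ 2)) e x
      = secondPartial v e x + ε * (2 * e.1 ^ 2 + 2 * e.2 ^ 2) := by
  have hdiff : ∀ y ∈ E, DifferentiableAt ℝ v y := fun y hy =>
    (hv.contDiffAt (hE.mem_nhds hy)).differentiableAt (by norm_num)
  have hw1 : ∀ y ∈ E, fderiv ℝ (fun z => v z + ε * (z.1 ^ 2 + z.2 ^ 2)) y e
      = fderiv ℝ v y e + ((2 * ε * e.1) * y.1 + (2 * ε * e.2) * y.2) := by
    intro y hy
    have h := (hdiff y hy).hasFDerivAt.add ((hasFDerivAt_quad y).const_mul ε)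
    rw [show (fun z => v z + ε * (z.1 ^ 2 + z.2 ^ 2)) = (v + fun y => ε * (y.1 ^ 2 + y.2 ^ 2)) from rfl, h.fderiv]
    simp
    ring
  have heq : (fun y => fderiv ℝ (fun z => v z + ε * (z.1 ^ 2 + z.2 ^ 2)) y e)
      =ᶠ[𝓝 x] fun y => fderiv ℝ v y e + ((2 * ε * e.1) * y.1 + (2 * ε * e.2) * y.2) := by
    filter_upwards [hE.mem_nhds hx] with y hy using hw1 y hy
  unfold secondPartial
  rw [heq.fderiv_eq]
  have hC1 : ContDiffAt ℝ 1 (fderiv ℝ v) x :=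
    (hv.contDiffAt (hE.mem_nhds hx)).fderiv_right (by norm_num)
  have hFe : DifferentiableAt ℝ (fun y => fderiv ℝ v y e) x :=
    (ContinuousLinearMap.apply ℝ ℝ e).differentiableAt.comp x
      (hC1.differentiableAt (by norm_num))
  have hlin : HasFDerivAt (fun y : ℝ × ℝ => (2 * ε * e.1) * y.1 + (2 * ε * e.2) * y.2)
      ((2 * ε * e.1) • ContinuousLinearMap.fst ℝ ℝ ℝ +
       (2 * ε * e.2) • ContinuousLinearMap.snd ℝ ℝ ℝ) x :=
    (hasFDerivAt_fst.const_mul (2 * ε * e.1)).add (hasFDerivAt_snd.const_mul (2 * ε * e.2))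
  have h2 := (hFe.hasFDerivAt.add hlin).fderiv
  rw [show (fun y => fderiv ℝ v y e + (2 * ε * e.1 * y.1 + 2 * ε * e.2 * y.2)) = ((fun y => fderiv ℝ v y e) + fun y => 2 * ε * e.1 * y.1 + 2 * ε * e.2 * y.2) from rfl, h2]
  simp
  ring

/-- One-sided maximum principle. -/
lemma harmonic_nonpos_on {E : Set (ℝ × ℝ)} (hEopen : IsOpen E)
    (hEb : Bornology.IsBounded E) {v : ℝ × ℝ → ℝ}
    (hcont : ContinuousOn v (closure E)) (hsmooth : ContDiffOn ℝ 2 v E)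
    (hharm : ∀ x ∈ E, secondPartial v (1, 0) x + secondPartial v (0, 1) x = 0)
    (hb : ∀ x ∈ frontier E, v x ≤ 0) : ∀ x ∈ E, v x ≤ 0 := by
  intro x₀ hx₀
  by_contra hpos
  push_neg at hpos
  have hK : IsCompact (closure E) := hEb.isCompact_closure
  have hx₀K : x₀ ∈ closure E := subset_closure hx₀
  have hne : (closure E).Nonempty := ⟨x₀, hx₀K⟩
  have hqc : Continuous (fun y : ℝ × ℝ => y.1 ^ 2 + y.2 ^ 2) := by continuity
  obtain ⟨z, hzK, hz⟩ := hK.exists_isMaxOn hne hqc.continuousOn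
  set R := z.1 ^ 2 + z.2 ^ 2 with hR
  have hR0 : 0 ≤ R := by positivity
  set ε := v x₀ / (2 * (R + 1)) with hε
  have hε0 : 0 < ε := div_pos hpos (by positivity)
  set w := fun y : ℝ × ℝ => v y + ε * (y.1 ^ 2 + y.2 ^ 2) with hw
  have hwc : ContinuousOn w (closure E) := hcont.add ((continuous_const.mul hqc).continuousOn)
  obtain ⟨p, hpK, hpmax⟩ := hK.exists_isMaxOn hne hwc
  have hwx₀ : v x₀ ≤ w x₀ := by
    have : 0 ≤ x₀.1 ^ 2 + x₀.2 ^ 2 := by positivity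
    simp only [hw]
    nlinarith
  have hpE : p ∈ E := by
    by_contra hpE
    have hpf : p ∈ frontier E := by
      rw [hEopen.frontier_eq]; exact ⟨hpK, hpE⟩
    have hqp : p.1 ^ 2 + p.2 ^ 2 ≤ R := hz hpK
    have hvp : v p ≤ 0 := hb p hpf
    have h1 : w p ≤ ε * R := by simp only [hw]; nlinarith
    have h4 : w x₀ ≤ w p := hpmax hx₀K
    have hkey : ε * (2 * (R + 1)) = v x₀ := by
      rw [hε]; field_simp
    have h5 : ε * R < v x₀ := by nlinarith
    linarith
  have hlm : IsLocalMax w p :=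
    hpmax.isLocalMax (mem_of_superset (hEopen.mem_nhds hpE) subset_closure)
  have hq2 : ContDiff ℝ 2 (fun y : ℝ × ℝ => y.1 ^ 2 + y.2 ^ 2) :=
    (contDiff_fst.pow 2).add (contDiff_snd.pow 2)
  have hws : ContDiffOn ℝ 2 w E :=
    hsmooth.add ((contDiff_const.mul hq2).contDiffOn)
  have h1 := secondPartial_nonpos_of_isLocalMax hEopen hpE hws hlm (1, 0)
  have h2 := secondPartial_nonpos_of_isLocalMax hEopen hpE hws hlm (0, 1)
  rw [hw, secondPartial_add_quad hEopen hsmooth ε hpE] at h1 h2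
  have hh := hharm p hpE
  norm_num at h1 h2
  linarith

/-- Unisolvence of vertex degrees of freedom: a function harmonic in a bounded
open polygon E, continuous up to the boundary, affine on every edge and
vanishing at every vertex, vanishes identically in E. -/
theorem vertex_dofs_unisolvent (N : ℕ) (hN : 3 ≤ N) (V : Fin N → ℝ × ℝ)
    (E : Set (ℝ × ℝ)) (hEopen : IsOpen E) (hEb : Bornology.IsBounded E)
    (hbdry : frontier E = ⋃ i : Fin N, segment ℝ (V i) (V (i + ⟨1, by omega⟩)))
    (v : ℝ × ℝ → ℝ)
    (hcont : ContinuousOn v (closure E))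
    (hsmooth : ContDiffOn ℝ 2 v E)
    (hharm : ∀ x ∈ E, secondPartial v (1, 0) x + secondPartial v (0, 1) x = 0)
    (haff : ∀ i : Fin N, ∃ a b c : ℝ,
      ∀ x ∈ segment ℝ (V i) (V (i + ⟨1, by omega⟩)), v x = a + b * x.1 + c * x.2)
    (hvert : ∀ i : Fin N, v (V i) = 0) :
    ∀ x ∈ E, v x = 0 := by
  -- v vanishes on the boundary
  have hb0 : ∀ x ∈ frontier E, v x = 0 := by
    intro x hx
    rw [hbdry] at hx
    simp only [mem_iUnion] at hx
    obtain ⟨i, hxs⟩ := hx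
    obtain ⟨a, b, c, hab⟩ := haff i
    have hP : a + b * (V i).1 + c * (V i).2 = 0 := by
      have h := hab (V i) (left_mem_segment ℝ _ _)
      rw [hvert i] at h; linarith
    have hQ : a + b * (V (i + ⟨1, by omega⟩)).1 + c * (V (i + ⟨1, by omega⟩)).2 = 0 := by
      have h := hab (V (i + ⟨1, by omega⟩)) (right_mem_segment ℝ _ _)
      rw [hvert (i + ⟨1, by omega⟩)] at h; linarith
    obtain ⟨s, t, hs, ht, hst, hxe⟩ := hxs
    have hx1 : x.1 = s * (V i).1 + t * (V (i + ⟨1, by omega⟩)).1 := by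
      rw [← hxe]; simp
    have hx2 : x.2 = s * (V i).2 + t * (V (i + ⟨1, by omega⟩)).2 := by
      rw [← hxe]; simp
    rw [hab x (by exact ⟨s, t, hs, ht, hst, hxe⟩), hx1, hx2]
    linear_combination s * hP + t * hQ - a * hst
  intro x hx
  have h1 : v x ≤ 0 :=
    harmonic_nonpos_on hEopen hEb hcont hsmooth hharm
      (fun y hy => le_of_eq (hb0 y hy)) x hx
  have h2 : -v x ≤ 0 := by
    have hharm' : ∀ y ∈ E, secondPartial (fun z => -v z) (1, 0) y
        + secondPartial (fun z => -v z) (0, 1) y = 0 := by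
      intro y hy
      rw [secondPartial_neg, secondPartial_neg]
      linarith [hharm y hy]
    exact harmonic_nonpos_on hEopen hEb hcont.neg hsmooth.neg hharm'
      (fun y hy => by rw [Pi.neg_apply, hb0 y hy]; simp) x hx
  linarith
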